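/- Every positive or negative zig-zag path p₀,…,p_{n−1} is foldable by a Turning Machine: there exists an assignment of initial integer states to the n monomers of a Turning Machine with initial positions pos(m_i)=(i,0) such that the machine computes the target configuration with pos(m_i) = p_i − p₀ for all i and all states 0. -/

import Mathlib

/-!
Give monomer `i` the number `tᵢ ∈ {0, 1, 2, 3}` of anticlockwise turns by `π/3` that take `x` to
the `i`-th step of a positive zig-zag path `p`. Every rule application lowers `∑ |sᵢ|`, so every
run terminates, and throughout a run a monomer with state `s` points in direction `ρ^(tᵢ - s) x`,
which never points downwards. This monotonicity of heights shows that while some state is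
nonzero some monomer can turn, so every terminal configuration is `p` itself. Negative zig-zag
paths are the mirror images of positive ones under the reflection in the `x`-axis, which turns a
machine into the one with negated states.
-/

namespace TuringMachineFolding

/-- Points of the triangular grid, coordinatised by `ℤ × ℤ`. -/
abbrev Pt : Type := ℤ × ℤ

/-- The six triangular-grid unit vectors `x, y, w, -x, -y, -w`. -/
def unitVecs : Set Pt :=
  {((1 : ℤ), (0 : ℤ)), (0, 1), (-1, 1), (-1, 0), (0, -1), (1, -1)}

/-- Anticlockwise rotation by `π/3`: the linear map with `ρ(1,0) = (0,1)`, `ρ(0,1) = (-1,1)`. -/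
def rot : Pt → Pt := fun p => (-p.2, p.1 + p.2)

/-- Clockwise rotation by `π/3`, the inverse of `rot`. -/
def rotInv : Pt → Pt := fun p => (p.1 + p.2, -p.1)

/-- `rot` as a permutation of the grid, so that integer powers `rotE ^ t` make sense. -/
def rotE : Equiv.Perm Pt where
  toFun := rot
  invFun := rotInv
  left_inv := by
    rintro ⟨a, b⟩
    simp only [rot, rotInv, Prod.mk.injEq]
    constructor <;> ring
  right_inv := by
    rintro ⟨a, b⟩
    simp only [rot, rotInv, Prod.mk.injEq]
    constructor <;> ring

/-- Scalar multiple of a grid vector. -/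
def zsmulPt (m : ℤ) (p : Pt) : Pt := (m * p.1, m * p.2)

/-- A configuration of a Turning Machine of length `n`: states and positions of the monomers
`m_0, …, m_{n-1}` (indices `≥ n` carry irrelevant junk values), such that `pos m_0 = (0,0)`,
consecutive positions differ by one of the six unit vectors, and positions are pairwise
distinct. -/
structure Config (n : ℕ) where
  st : ℕ → ℤ
  pos : ℕ → Pt
  pos_zero : pos 0 = (0, 0)
  step_unit : ∀ i, i + 1 < n → pos (i + 1) - pos i ∈ unitVecs
  pos_inj : ∀ i < n, ∀ j < n, pos i = pos j → i = j

/-- The direction of monomer `m_i` (meaningful for `i + 1 < n`). -/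
def dir {n : ℕ} (c : Config n) (i : ℕ) : Pt := c.pos (i + 1) - c.pos i

/-- The translation vector applied to the head of `m_i` when the turning rule fires at `m_i`:
`ρ²(d_i)` for a positive state, `ρ⁻²(d_i)` for a negative state. -/
def delta {n : ℕ} (c : Config n) (i : ℕ) : Pt :=
  if 0 < c.st i then rot (rot (dir c i)) else rotInv (rotInv (dir c i))

/-- The state sequence after applying the turning rule at monomer `i`. -/
def nextSt {n : ℕ} (c : Config n) (i : ℕ) : ℕ → ℤ := fun j =>
  if j = i then (if 0 < c.st i then c.st i - 1 else c.st i + 1) else c.st j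

/-- The position sequence after applying the turning rule at monomer `i`. -/
def nextPos {n : ℕ} (c : Config n) (i : ℕ) : ℕ → Pt := fun j =>
  if i < j then c.pos j + delta c i else c.pos j

/-- The turning rule applied at monomer `i` transforms `c` into `c'`.  The requirement that
`c'` is again a `Config` (pairwise distinct positions) encodes that the move is not blocked. -/
def StepAt {n : ℕ} (c : Config n) (i : ℕ) (c' : Config n) : Prop :=
  i < n ∧ c.st i ≠ 0 ∧ (∀ j < n, c'.st j = nextSt c i j) ∧ (∀ j < n, c'.pos j = nextPos c i j)

/-- The turning rule is applicable to monomer `i` in configuration `c`. -/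
def Applicable {n : ℕ} (c : Config n) (i : ℕ) : Prop := ∃ c', StepAt c i c'

/-- Monomer `i` is blocked in `c`: nonzero state, but no applicable rule. -/
def Blocked {n : ℕ} (c : Config n) (i : ℕ) : Prop :=
  i < n ∧ c.st i ≠ 0 ∧ ¬ Applicable c i

/-- One asynchronous step of the machine. -/
def Step {n : ℕ} (c c' : Config n) : Prop := ∃ i, StepAt c i c'

/-- `c` is reachable from `c₀` by a finite sequence of rule applications. -/
def Reachable {n : ℕ} (c₀ c : Config n) : Prop := Relation.ReflTransGen Step c₀ c

/-- No rule is applicable in `c`. -/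
def Terminal {n : ℕ} (c : Config n) : Prop := ∀ i, ¬ Applicable c i

/-- `c` is permanently blocked: some state is nonzero but no monomer admits an applicable rule. -/
def PermBlocked {n : ℕ} (c : Config n) : Prop :=
  (∃ i < n, c.st i ≠ 0) ∧ Terminal c

/-- The Turning Machine with initial configuration `c₀` computes the target configuration `ct`:
every maximal sequence of rule applications from `c₀` is finite and ends in `ct`
(configurations are compared on the meaningful indices `< n`). -/
def Computes {n : ℕ} (c₀ ct : Config n) : Prop :=
  (¬ ∃ f : ℕ → Config n, f 0 = c₀ ∧ ∀ k, Step (f k) (f (k + 1))) ∧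
  ∀ c, Reachable c₀ c → Terminal c → ∀ i < n, c.st i = ct.st i ∧ c.pos i = ct.pos i

/-- The initial configuration with monomers on the x-axis, `pos m_i = (i,0)`, and
initial states `s₀`. -/
def mkInit (n : ℕ) (s₀ : ℕ → ℤ) : Config n where
  st := s₀
  pos := fun i => ((i : ℤ), 0)
  pos_zero := by simp
  step_unit := by
    intro i _
    have h : (((i + 1 : ℕ) : ℤ), (0 : ℤ)) - (((i : ℕ) : ℤ), (0 : ℤ)) = ((1 : ℤ), (0 : ℤ)) := by
      simp only [Prod.mk_sub_mk, Prod.mk.injEq]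
      constructor <;> push_cast <;> ring
    rw [h]
    simp [unitVecs]
  pos_inj := by
    intro i _ j _ h
    have h1 : ((i : ℕ) : ℤ) = ((j : ℕ) : ℤ) := congrArg Prod.fst h
    exact_mod_cast h1

/-- The initial configuration of the line-rotating Turning Machine `L^σ_n`:
`pos m_i = (i,0)`, states `σ` except the last monomer which has state `0`. -/
def lineInit (n : ℕ) (σ : ℤ) : Config n :=
  mkInit n (fun i => if i + 1 = n then 0 else σ)

/-- `Δs`: the number of rule applications made to monomer `i` on the way from `c₀` to `c`
(each application changes the state by one, towards `0`). -/
def dS {n : ℕ} (c₀ c : Config n) (i : ℕ) : ℤ := |c₀.st i - c.st i|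

/-- The set of positions occupied by a configuration. -/
def posSet {n : ℕ} (c : Config n) : Set Pt := {q | ∃ i < n, c.pos i = q}


/-- Adjacency on the triangular grid. -/
def Adj (p q : Pt) : Prop := q - p ∈ unitVecs

/-- The graph induced by the edge relation `E` on the set `S` is connected. -/
def ConnectedIn (E : Pt → Pt → Prop) (S : Set Pt) : Prop :=
  ∀ p ∈ S, ∀ q ∈ S, Relation.ReflTransGen (fun a b => a ∈ S ∧ b ∈ S ∧ E a b) p q

/-- A shape: a finite subset of the grid whose induced graph is connected. -/
def IsShape (S : Set Pt) : Prop := S.Finite ∧ ConnectedIn Adj S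

/-- `y`-monotone shape: the points of each row form a set of consecutive integers. -/
def YMonotone (S : Set Pt) : Prop :=
  ∀ j x₁ x₂ x₃ : ℤ, x₁ ≤ x₂ → x₂ ≤ x₃ → (x₁, j) ∈ S → (x₃, j) ∈ S → (x₂, j) ∈ S

/-- Adjacency along the `x` and `y` axes only. -/
def AdjXY (p q : Pt) : Prop :=
  q - p ∈ ({((1 : ℤ), (0 : ℤ)), (-1, 0), (0, 1), (0, -1)} : Set Pt)

/-- `xy`-connected: connected using only `±x` and `±y` edges. -/
def XYConnected (S : Set Pt) : Prop := ConnectedIn AdjXY S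

/-- The perimeter of a shape: its points having a neighbour outside the shape. -/
def perimeter (S : Set Pt) : Set Pt := {p ∈ S | ∃ v ∈ unitVecs, p + v ∉ S}

/-- Translation of a set of points. -/
def translate (t : Pt) (S : Set Pt) : Set Pt := (fun p => p + t) '' S

/-- The cardinality of the symmetric difference of two sets of points. -/
noncomputable def symmDiffCard (A B : Set Pt) : ℕ := ((A \ B) ∪ (B \ A)).ncard

/-- Error of a configuration w.r.t. a shape: the least cardinality, over all translations `t`,
of the symmetric difference of `S + t` and the set of monomer positions. -/
noncomputable def foldError {n : ℕ} (S : Set Pt) (c : Config n) : ℕ :=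
  sInf {m | ∃ t : Pt, symmDiffCard (translate t S) (posSet c) = m}

/-- The allowed steps of a `yw`-chain. -/
def ywSteps : Set Pt := {((0 : ℤ), (1 : ℤ)), (-1, 1)}

/-- `c 0, …, c (k-1)` is a `yw`-separator of the `y`-monotone shape `S`: a `yw`-chain inside `S`
from the bottommost row of `S` to the topmost row of `S`. -/
def IsYWSep (S : Set Pt) (k : ℕ) (c : ℕ → Pt) : Prop :=
  0 < k ∧ (∀ ℓ, ℓ + 1 < k → c (ℓ + 1) - c ℓ ∈ ywSteps) ∧ (∀ ℓ < k, c ℓ ∈ S) ∧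
    (∀ p ∈ S, (c 0).2 ≤ p.2) ∧ (∀ p ∈ S, p.2 ≤ (c (k - 1)).2)

/-- The shape `S` scaled by a factor `2`. -/
def scale2 (S : Set Pt) : Set Pt :=
  {q | ∃ p ∈ S, ∃ a b : ℤ, (a = 0 ∨ a = 1) ∧ (b = 0 ∨ b = 1) ∧ q = (2 * p.1 + a, 2 * p.2 + b)}

/-- The right boundary of a shape: the rightmost point of each nonempty row. -/
def rightBdry (S : Set Pt) : Set Pt := {p ∈ S | ∀ q ∈ S, q.2 = p.2 → q.1 ≤ p.1}

/-- The left boundary of a shape: the leftmost point of each nonempty row. -/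
def leftBdry (S : Set Pt) : Set Pt := {p ∈ S | ∀ q ∈ S, q.2 = p.2 → p.1 ≤ q.1}

/-- The "almost rectangle" `R_{k'}` from the definition of the `1`-gap spiral. -/
def spiralRing (k : ℤ) : Set Pt :=
  (({p : Pt | (p.2 = 2 * k ∨ p.2 = -(2 * k)) ∧ -(2 * k) ≤ p.1 ∧ p.1 ≤ 2 * k - 1} ∪
      {p : Pt | (p.1 = -(2 * k) ∨ p.1 = 2 * k - 1) ∧ -(2 * k) ≤ p.2 ∧ p.2 ≤ 2 * k}) ∪
      {(2 * k - 2, -(2 * k) + 2), (2 * k, -(2 * k)), (2 * k + 1, -(2 * k))}) \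
    {(2 * k - 1, -(2 * k) + 1)}

/-- The `k`-turn `1`-gap spiral `S_k`. -/
def spiral (k : ℕ) : Set Pt := ⋃ j ∈ Finset.Icc 1 k, spiralRing (j : ℤ)

/-- The base turning numbers `t_i` of the inside-to-outside sequence. -/
def tIn (t0 : ℤ) : ℕ → ℤ
  | 0 => t0
  | i + 1 => tIn t0 i + (if (i + 1) % 2 = 0 then 2 else 1)

/-- The inside-to-outside turning number sequence
`T_in(t₀) = [t₀]¹,[t₁]²,…,[t_{4k}]^{4k+1}, t_{4k}`. -/
def TInList (k : ℕ) (t0 : ℤ) : List ℤ :=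
  ((List.range (4 * k + 1)).flatMap fun i => List.replicate (i + 1) (tIn t0 i)) ++ [tIn t0 (4 * k)]

/-- The base turning numbers `t_i` of the outside-to-inside sequence. -/
def tOut (t0 : ℤ) : ℕ → ℤ
  | 0 => t0
  | i + 1 => tOut t0 i - (if (i + 1) % 2 = 0 then 1 else 2)

/-- The outside-to-inside turning number sequence
`T_out(t₀) = t₀,[t₀]^{4k+1},[t₁]^{4k},…,[t_{4k}]¹`. -/
def TOutList (k : ℕ) (t0 : ℤ) : List ℤ :=
  t0 :: ((List.range (4 * k + 1)).flatMap fun i => List.replicate (4 * k + 1 - i) (tOut t0 i))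

/-- The cross shape with arm length `a`. -/
def cross (a : ℤ) : Set Pt :=
  {p : Pt | p.2 = 0 ∧ -a ≤ p.1 ∧ p.1 ≤ a} ∪ {p : Pt | p.1 = 0 ∧ -a ≤ p.2 ∧ p.2 ≤ a}

/-- A positive zig-zag path: pairwise distinct points with steps in `{x, -x, y, w}`. -/
def PosZigZag (n : ℕ) (p : ℕ → Pt) : Prop :=
  (∀ i < n, ∀ j < n, p i = p j → i = j) ∧
    ∀ i, i + 1 < n → p (i + 1) - p i ∈ ({((1 : ℤ), (0 : ℤ)), (-1, 0), (0, 1), (-1, 1)} : Set Pt)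

/-- A negative zig-zag path: pairwise distinct points with steps in `{x, -x, -y, -w}`. -/
def NegZigZag (n : ℕ) (p : ℕ → Pt) : Prop :=
  (∀ i < n, ∀ j < n, p i = p j → i = j) ∧
    ∀ i, i + 1 < n → p (i + 1) - p i ∈ ({((1 : ℤ), (0 : ℤ)), (-1, 0), (0, -1), (1, -1)} : Set Pt)

lemma rot_rot_eq (v : Pt) : rot (rot v) = rot v - v := by
  simp only [rot, Prod.ext_iff, Prod.fst_sub, Prod.snd_sub]
  constructor <;> ring

lemma rotInv_rotInv_eq (v : Pt) : rotInv (rotInv v) = rotInv v - v := by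
  simp only [rotInv, Prod.ext_iff, Prod.fst_sub, Prod.snd_sub]
  constructor <;> ring

lemma rot_mem_unitVecs {v : Pt} (h : v ∈ unitVecs) : rot v ∈ unitVecs := by
  simp only [unitVecs, Set.mem_insert_iff, Set.mem_singleton_iff] at h ⊢
  rcases h with rfl | rfl | rfl | rfl | rfl | rfl <;> simp [rot]

lemma rotInv_mem_unitVecs {v : Pt} (h : v ∈ unitVecs) : rotInv v ∈ unitVecs := by
  simp only [unitVecs, Set.mem_insert_iff, Set.mem_singleton_iff] at h ⊢
  rcases h with rfl | rfl | rfl | rfl | rfl | rfl <;> simp [rotInv]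

namespace Config

variable {n : ℕ}

lemma ext {c c' : Config n} (hst : c.st = c'.st) (hpos : c.pos = c'.pos) : c = c' := by
  cases c; cases c'
  cases hst; cases hpos
  rfl

lemma pos_sub_pos_eq_sum_dir (c : Config n) {k j : ℕ} (hkj : k ≤ j) :
    c.pos j - c.pos k = ∑ m ∈ Finset.Ico k j, dir c m :=
  (Finset.sum_Ico_sub c.pos hkj).symm

lemma dir_add_delta (c : Config n) (i : ℕ) :
    dir c i + delta c i = if 0 < c.st i then rot (dir c i) else rotInv (dir c i) := by
  unfold delta
  split_ifs
  · rw [rot_rot_eq]; abel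
  · rw [rotInv_rotInv_eq]; abel

lemma applicable_of_forall_ne (c : Config n) {i : ℕ} (hi : i < n) (hst : c.st i ≠ 0)
    (hne : ∀ k j, k ≤ i → i < j → j < n → c.pos j + delta c i ≠ c.pos k) :
    Applicable c i := by
  refine ⟨⟨nextSt c i, nextPos c i, ?_, ?_, ?_⟩, hi, hst, fun _ _ => rfl, fun _ _ => rfl⟩
  · simp [nextPos, c.pos_zero]
  · intro j hj
    rcases lt_trichotomy i j with hij | rfl | hji
    · simpa [nextPos, hij, Nat.lt_succ_of_lt hij] using c.step_unit j hj
    · have hturn : c.pos (i + 1) + delta c i - c.pos i = dir c i + delta c i := by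
        rw [dir]; abel
      simp only [nextPos, lt_add_one, if_true, lt_irrefl, if_false, hturn, dir_add_delta]
      split_ifs
      · exact rot_mem_unitVecs (c.step_unit i hj)
      · exact rotInv_mem_unitVecs (c.step_unit i hj)
    · simpa [nextPos, not_lt.2 hji.le, not_lt.2 (Nat.succ_le_of_lt hji)] using c.step_unit j hj
  · intro j hj k hk hjk
    simp only [nextPos] at hjk
    split_ifs at hjk with hij hik hik
    · exact c.pos_inj j hj k hk (add_right_cancel hjk)
    · exact absurd hjk (hne k j (not_lt.1 hik) hij hj)
    · exact absurd hjk.symm (hne j k (not_lt.1 hij) hik hk)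
    · exact c.pos_inj j hj k hk hjk

def remainingTurns (c : Config n) : ℕ := ∑ i ∈ Finset.range n, (c.st i).natAbs

end Config

namespace StepAt

variable {n : ℕ} {c c' : Config n} {i : ℕ}

lemma st_of_ne (h : StepAt c i c') {m : ℕ} (hm : m < n) (hmi : m ≠ i) : c'.st m = c.st m := by
  rw [h.2.2.1 m hm, nextSt, if_neg hmi]

lemma st_self_of_pos (h : StepAt c i c') (hpos : 0 < c.st i) : c'.st i = c.st i - 1 := by
  rw [h.2.2.1 i h.1, nextSt, if_pos rfl, if_pos hpos]

lemma natAbs_st_self_add_one (h : StepAt c i c') : (c'.st i).natAbs + 1 = (c.st i).natAbs := by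
  rw [h.2.2.1 i h.1, nextSt, if_pos rfl]
  have := h.2.1
  split_ifs <;> omega

lemma dir_of_ne (h : StepAt c i c') {m : ℕ} (hm : m + 1 < n) (hmi : m ≠ i) :
    dir c' m = dir c m := by
  simp only [dir, h.2.2.2 m (by omega), h.2.2.2 (m + 1) hm, nextPos]
  split_ifs <;> first | omega | abel

lemma dir_self_of_pos (h : StepAt c i c') (hi : i + 1 < n) (hpos : 0 < c.st i) :
    dir c' i = rot (dir c i) := by
  have hturn := c.dir_add_delta i
  rw [if_pos hpos] at hturn
  simp only [dir, h.2.2.2 i h.1, h.2.2.2 (i + 1) hi, nextPos, lt_irrefl, if_false,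
    lt_add_one, if_true] at hturn ⊢
  rw [← hturn]; abel

lemma remainingTurns_lt (h : StepAt c i c') : c'.remainingTurns < c.remainingTurns := by
  refine Finset.sum_lt_sum (fun m hm => ?_) ⟨i, Finset.mem_range.2 h.1, by
    have := h.natAbs_st_self_add_one; omega⟩
  rcases eq_or_ne m i with rfl | hmi
  · have := h.natAbs_st_self_add_one; omega
  · rw [h.st_of_ne (Finset.mem_range.1 hm) hmi]

end StepAt

namespace Config

variable {n : ℕ}

lemma not_exists_infinite_run (c₀ : Config n) :
    ¬ ∃ f : ℕ → Config n, f 0 = c₀ ∧ ∀ k, Step (f k) (f (k + 1)) := by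
  rintro ⟨f, -, hf⟩
  obtain ⟨k, hk⟩ := WellFounded.not_rel_apply_succ (r := (· < ·)) (fun k => (f k).remainingTurns)
  obtain ⟨i, hi⟩ := hf k
  exact hk hi.remainingTurns_lt

lemma exists_reachable_terminal (c₀ : Config n) : ∃ c, Reachable c₀ c ∧ Terminal c := by
  obtain ⟨c, hc, hmin⟩ :=
    (measure (remainingTurns (n := n))).wf.has_min {c | Reachable c₀ c} ⟨c₀, .refl⟩
  exact ⟨c, hc, fun i ⟨c', h⟩ =>
    hmin c' (hc.tail ⟨i, h⟩) h.remainingTurns_lt⟩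

lemma exists_computes {c₀ : Config n} {s : ℕ → ℤ} {q : ℕ → Pt}
    (h : ∀ c, Reachable c₀ c → Terminal c → ∀ i < n, c.st i = s i ∧ c.pos i = q i) :
    ∃ ct, Computes c₀ ct ∧ ∀ i < n, ct.st i = s i ∧ ct.pos i = q i := by
  obtain ⟨ct, hct, hterm⟩ := exists_reachable_terminal c₀
  refine ⟨ct, ⟨not_exists_infinite_run c₀, fun c hc hc' i hi => ?_⟩, h ct hct hterm⟩
  obtain ⟨hs, hq⟩ := h c hc hc' i hi
  obtain ⟨hs', hq'⟩ := h ct hct hterm i hi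
  exact ⟨hs.trans hs'.symm, hq.trans hq'.symm⟩

end Config

/-- The reflection of the triangular grid in the `x`-axis: it fixes `±x` and swaps `y ↔ -w`,
`w ↔ -y`, so it conjugates `ρ` to `ρ⁻¹`. -/
def reflect : Pt ≃+ Pt where
  toFun v := (v.1 + v.2, -v.2)
  invFun v := (v.1 + v.2, -v.2)
  left_inv v := by simp
  right_inv v := by simp
  map_add' v w := Prod.ext (by dsimp; ring) (by dsimp; ring)

lemma reflect_reflect (v : Pt) : reflect (reflect v) = v := reflect.left_inv v

lemma reflect_mem_unitVecs {v : Pt} (h : v ∈ unitVecs) : reflect v ∈ unitVecs := by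
  simp only [unitVecs, Set.mem_insert_iff, Set.mem_singleton_iff] at h ⊢
  rcases h with rfl | rfl | rfl | rfl | rfl | rfl <;> simp [reflect]

lemma reflect_rot (v : Pt) : reflect (rot v) = rotInv (reflect v) := by
  ext <;> simp [reflect, rot, rotInv]

lemma reflect_rotInv (v : Pt) : reflect (rotInv v) = rot (reflect v) := by
  ext <;> simp [reflect, rot, rotInv]

namespace Config

variable {n : ℕ}

def mirror (c : Config n) : Config n where
  st j := -c.st j
  pos j := reflect (c.pos j)
  pos_zero := by rw [c.pos_zero]; rfl
  step_unit i hi := by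
    rw [← map_sub]
    exact reflect_mem_unitVecs (c.step_unit i hi)
  pos_inj i hi j hj h := c.pos_inj i hi j hj (reflect.injective h)

lemma mirror_mirror (c : Config n) : c.mirror.mirror = c :=
  Config.ext (funext fun j => neg_neg (c.st j)) (funext fun j => reflect_reflect (c.pos j))

lemma dir_mirror (c : Config n) (i : ℕ) : dir c.mirror i = reflect (dir c i) :=
  (map_sub reflect _ _).symm

lemma delta_mirror (c : Config n) {i : ℕ} (hst : c.st i ≠ 0) :
    delta c.mirror i = reflect (delta c i) := by
  have hms : c.mirror.st i = -c.st i := rfl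
  rcases hst.lt_or_gt with hneg | hpos
  · rw [delta, delta, hms, if_pos (neg_pos.2 hneg), if_neg hneg.not_gt, dir_mirror,
      reflect_rotInv, reflect_rotInv]
  · rw [delta, delta, hms, if_neg (by omega), if_pos hpos, dir_mirror, reflect_rot, reflect_rot]

lemma mirror_mkInit (s₀ : ℕ → ℤ) : (mkInit n s₀).mirror = mkInit n (fun i => -s₀ i) :=
  Config.ext rfl (funext fun j => by simp [mirror, mkInit, reflect])

end Config

lemma StepAt.mirror {n : ℕ} {c c' : Config n} {i : ℕ} (h : StepAt c i c') :
    StepAt c.mirror i c'.mirror := by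
  obtain ⟨hi, hst, hsts, hposs⟩ := h
  refine ⟨hi, neg_ne_zero.2 hst, fun j hj => ?_, fun j hj => ?_⟩
  · change -c'.st j = nextSt c.mirror i j
    rw [hsts j hj]
    simp only [nextSt, Config.mirror]
    split_ifs <;> omega
  · change reflect (c'.pos j) = nextPos c.mirror i j
    rw [hposs j hj]
    simp only [nextPos, Config.delta_mirror c hst]
    split_ifs
    · exact map_add reflect _ _
    · rfl

lemma Reachable.mirror {n : ℕ} {c c' : Config n} (h : Reachable c c') :
    Reachable c.mirror c'.mirror := by
  induction h with
  | refl => exact .refl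
  | tail _ hstep ih =>
    obtain ⟨i, hi⟩ := hstep
    exact ih.tail ⟨i, hi.mirror⟩

lemma Terminal.mirror {n : ℕ} {c : Config n} (h : Terminal c) : Terminal c.mirror := by
  rintro i ⟨c', hc'⟩
  have := hc'.mirror
  rw [Config.mirror_mirror] at this
  exact h i ⟨_, this⟩

/-- For `k = 0, 1, 2, 3` these are the steps `x, y, w, -x` of positive zig-zag paths. -/
def zigDir (k : ℤ) : Pt := (rotE ^ k) (1, 0)

lemma zigDir_add_one (k : ℤ) : zigDir (k + 1) = rot (zigDir k) := by
  rw [zigDir, add_comm, zpow_one_add, Equiv.Perm.mul_apply]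
  rfl

@[simp] lemma zigDir_zero : zigDir 0 = (1, 0) := rfl

@[simp] lemma zigDir_one : zigDir 1 = (0, 1) := by simpa [rot] using zigDir_add_one 0

@[simp] lemma zigDir_two : zigDir 2 = (-1, 1) := by simpa [rot] using zigDir_add_one 1

@[simp] lemma zigDir_three : zigDir 3 = (-1, 0) := by simpa [rot] using zigDir_add_one 2

lemma zigDir_snd_nonneg {k : ℤ} (h0 : 0 ≤ k) (h3 : k ≤ 3) : 0 ≤ (zigDir k).2 := by
  interval_cases k <;> simp

/-- The number of turns `k` with `zigDir k = v`, for a step `v` of a positive zig-zag path. -/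
def stepTurns (v : Pt) : ℤ :=
  if v = (1, 0) then 0 else if v = (0, 1) then 1 else if v = (-1, 1) then 2 else 3

lemma stepTurns_nonneg (v : Pt) : 0 ≤ stepTurns v := by
  unfold stepTurns; split_ifs <;> norm_num

lemma stepTurns_le_three (v : Pt) : stepTurns v ≤ 3 := by
  unfold stepTurns; split_ifs <;> norm_num

lemma zigDir_stepTurns {v : Pt}
    (h : v ∈ ({((1 : ℤ), (0 : ℤ)), (-1, 0), (0, 1), (-1, 1)} : Set Pt)) :
    zigDir (stepTurns v) = v := by
  simp only [Set.mem_insert_iff, Set.mem_singleton_iff] at h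
  rcases h with rfl | rfl | rfl | rfl <;> simp [stepTurns]

def zigTurns (p : ℕ → Pt) (i : ℕ) : ℤ := stepTurns (p (i + 1) - p i)

lemma PosZigZag.zigDir_zigTurns {n : ℕ} {p : ℕ → Pt} (hp : PosZigZag n p) {i : ℕ}
    (hi : i + 1 < n) : zigDir (zigTurns p i) = p (i + 1) - p i :=
  zigDir_stepTurns (hp.2 i hi)

section TurnInv

variable {n : ℕ} {t : ℕ → ℤ} {c c' : Config n}

/-- Monomer `i` has made `t i - c.st i` of its `t i` anticlockwise turns, so its direction is
`zigDir (t i - c.st i)`. -/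
def TurnInv (t : ℕ → ℤ) (c : Config n) : Prop :=
  (∀ i < n, 0 ≤ c.st i ∧ c.st i ≤ t i) ∧ ∀ i, i + 1 < n → dir c i = zigDir (t i - c.st i)

lemma turnInv_mkInit (ht : ∀ i, 0 ≤ t i) : TurnInv t (mkInit n t) := by
  refine ⟨fun i _ => ⟨ht i, le_rfl⟩, fun i _ => ?_⟩
  simp [dir, mkInit]

lemma TurnInv.of_stepAt (hc : TurnInv t c) {i : ℕ} (h : StepAt c i c') : TurnInv t c' := by
  have hpos : 0 < c.st i := lt_of_le_of_ne (hc.1 i h.1).1 (Ne.symm h.2.1)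
  refine ⟨fun m hm => ?_, fun m hm => ?_⟩
  · rcases eq_or_ne m i with rfl | hmi
    · rw [h.st_self_of_pos hpos]
      have := hc.1 m hm
      omega
    · rw [h.st_of_ne hm hmi]
      exact hc.1 m hm
  · rcases eq_or_ne m i with rfl | hmi
    · rw [h.dir_self_of_pos hm hpos, hc.2 m hm, h.st_self_of_pos hpos, ← zigDir_add_one]
      ring_nf
    · rw [h.dir_of_ne hm hmi, h.st_of_ne (by omega) hmi]
      exact hc.2 m hm

lemma TurnInv.of_reachable (ht : ∀ i, 0 ≤ t i) (h : Reachable (mkInit n t) c) : TurnInv t c := by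
  induction h with
  | refl => exact turnInv_mkInit ht
  | tail _ hstep ih =>
    obtain ⟨i, hi⟩ := hstep
    exact ih.of_stepAt hi

lemma TurnInv.delta_eq (hc : TurnInv t c) {i : ℕ} (hi : i + 1 < n) (hst : c.st i ≠ 0) :
    delta c i = zigDir (t i - c.st i + 1) - zigDir (t i - c.st i) := by
  have hpos : 0 < c.st i := lt_of_le_of_ne (hc.1 i (by omega)).1 (Ne.symm hst)
  rw [delta, if_pos hpos, rot_rot_eq, hc.2 i hi, zigDir_add_one]

lemma TurnInv.dir_snd_nonneg (hc : TurnInv t c) (ht : ∀ i, t i ≤ 3) {m : ℕ} (hm : m + 1 < n) :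
    0 ≤ (dir c m).2 := by
  have := hc.1 m (by omega)
  rw [hc.2 m hm]
  exact zigDir_snd_nonneg (by omega) (by linarith [ht m])

lemma TurnInv.pos_snd_mono (hc : TurnInv t c) (ht : ∀ i, t i ≤ 3) {k j : ℕ} (hkj : k ≤ j)
    (hj : j < n) : (c.pos k).2 ≤ (c.pos j).2 := by
  have hsum := congrArg Prod.snd (c.pos_sub_pos_eq_sum_dir hkj)
  rw [Prod.snd_sub, Prod.snd_sum] at hsum
  have : 0 ≤ ∑ m ∈ Finset.Ico k j, (dir c m).2 := Finset.sum_nonneg fun m hm =>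
    hc.dir_snd_nonneg ht (by have := (Finset.mem_Ico.1 hm).2; omega)
  linarith

end TurnInv

section Unblocking

variable {n : ℕ} {c : Config n}

/-- A monomer that has turned at most once can always turn: this lifts the rest of the chain
strictly above the rows reached so far. -/
lemma TurnInv.applicable_of_le_one {t : ℕ → ℤ} (hc : TurnInv t c) (ht : ∀ i, t i ≤ 3)
    {i : ℕ} (hi : i < n) (hst : c.st i ≠ 0) (hle : t i - c.st i ≤ 1) : Applicable c i := by
  refine c.applicable_of_forall_ne hi hst fun k j hki hij hj hcol => ?_
  have hi1 : i + 1 < n := by omega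
  have hup : (zigDir (t i - c.st i + 1)).2 = 1 := by
    obtain h | h : t i - c.st i = 0 ∨ t i - c.st i = 1 := by have := hc.1 i hi; omega
    all_goals rw [h]; simp
  have hrise : (c.pos (i + 1)).2 = (c.pos i).2 + (zigDir (t i - c.st i)).2 := by
    rw [← hc.2 i hi1, dir, Prod.snd_sub]; ring
  have hcol2 := congrArg Prod.snd hcol
  rw [Prod.snd_add, hc.delta_eq hi1 hst, Prod.snd_sub, hup] at hcol2
  have := hc.pos_snd_mono ht hki hi
  have := hc.pos_snd_mono ht (k := i + 1) hij hj
  linarith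

/-- If every active monomer has already turned twice, the last active one `i` can make its final
turn: a collision `pos j - (0,1) = pos k` with `k ≤ i < j` would force the chain between `k` and
`j` to run at height `(pos i).2` up to `i`, hence to follow `p` everywhere except at `i`, where
it differs from `p` by exactly `(0,1)`; so `p j = p k`. -/
lemma PosZigZag.applicable_of_last_active {p : ℕ → Pt} (hp : PosZigZag n p)
    (hc : TurnInv (zigTurns p) c) {i : ℕ} (hi : i < n) (hst : c.st i ≠ 0)
    (hlast : ∀ m < n, i < m → c.st m = 0)
    (hturned : ∀ m < n, c.st m ≠ 0 → 1 < zigTurns p m - c.st m) : Applicable c i := by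
  have ht : ∀ m, zigTurns p m ≤ 3 := fun m => stepTurns_le_three _
  have hst_one : ∀ m < n, c.st m ≠ 0 → c.st m = 1 ∧ zigTurns p m = 3 := fun m hm hsm => by
    have := hc.1 m hm; have := hturned m hm hsm; have := ht m; omega
  obtain ⟨hsti, hti⟩ := hst_one i hi hst
  refine c.applicable_of_forall_ne hi hst fun k j hki hij hj hcol => ?_
  have hi1 : i + 1 < n := by omega
  have hdiri : dir c i = (-1, 1) := by rw [hc.2 i hi1, hsti, hti]; simp
  have hjk : c.pos j - c.pos k = (0, 1) := by
    rw [← hcol, hc.delta_eq hi1 hst, hsti, hti]; simp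
  have hki_ht : (c.pos k).2 = (c.pos i).2 := by
    have h1 := hc.pos_snd_mono ht hki hi
    have h2 := hc.pos_snd_mono ht (k := i + 1) hij hj
    have h3 : (c.pos (i + 1)).2 = (c.pos i).2 + 1 := by
      have := congrArg Prod.snd hdiri; simp only [dir, Prod.snd_sub] at this; omega
    have h4 := congrArg Prod.snd hjk; simp only [Prod.snd_sub] at h4
    omega
  have hdir : ∀ m ∈ Finset.Ico k j, m ≠ i → dir c m = p (m + 1) - p m := by
    intro m hm hmi
    obtain ⟨hkm, hmj⟩ := Finset.mem_Ico.1 hm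
    suffices c.st m = 0 by rw [hc.2 m (by omega), this, sub_zero, hp.zigDir_zigTurns (by omega)]
    rcases lt_or_gt_of_ne hmi with hmi | hmi
    · by_contra hsm
      obtain ⟨hsm1, htm⟩ := hst_one m (by omega) hsm
      have h1 := hc.pos_snd_mono ht hkm (by omega)
      have h2 := hc.pos_snd_mono ht (k := m + 1) hmi hi
      have hdirm : dir c m = (-1, 1) := by rw [hc.2 m (by omega), hsm1, htm]; simp
      have h3 := congrArg Prod.snd hdirm
      simp only [dir, Prod.snd_sub] at h3
      omega
    · exact hlast m (by omega) hmi
  have hdiff : ∑ m ∈ Finset.Ico k j, (dir c m - (p (m + 1) - p m)) = (0, 1) := by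
    rw [Finset.sum_eq_single_of_mem i (Finset.mem_Ico.2 ⟨hki, hij⟩)
      fun m hm hmi => by rw [hdir m hm hmi, sub_self],
      hdiri, ← hp.zigDir_zigTurns hi1, hti]
    simp
  rw [Finset.sum_sub_distrib, ← c.pos_sub_pos_eq_sum_dir (by omega),
    Finset.sum_Ico_sub p (by omega), hjk, sub_eq_self, sub_eq_zero] at hdiff
  exact absurd (hp.1 j hj k (by omega) hdiff) (by omega)

lemma PosZigZag.exists_applicable {p : ℕ → Pt} (hp : PosZigZag n p)
    (hc : TurnInv (zigTurns p) c) (hactive : ∃ i < n, c.st i ≠ 0) : ∃ i, Applicable c i := by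
  by_cases hA : ∃ i < n, c.st i ≠ 0 ∧ zigTurns p i - c.st i ≤ 1
  · obtain ⟨i, hi, hst, hle⟩ := hA
    exact ⟨i, hc.applicable_of_le_one (fun m => stepTurns_le_three _) hi hst hle⟩
  · push Not at hA
    obtain ⟨i₀, hi₀, hst₀⟩ := hactive
    obtain ⟨i, hiS, hmax⟩ := ((Finset.range n).filter fun m => c.st m ≠ 0).exists_max_image id
      ⟨i₀, Finset.mem_filter.2 ⟨Finset.mem_range.2 hi₀, hst₀⟩⟩
    obtain ⟨hi, hst⟩ := Finset.mem_filter.1 hiS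
    refine ⟨i, hp.applicable_of_last_active hc (Finset.mem_range.1 hi) hst
      (fun m hm him => ?_) fun m hm hsm => hA m hm hsm⟩
    by_contra hsm
    exact absurd (hmax m (Finset.mem_filter.2 ⟨Finset.mem_range.2 hm, hsm⟩)) (by simpa using him)

end Unblocking

section Folding

variable {n : ℕ} {p : ℕ → Pt} {c : Config n}

lemma PosZigZag.eq_of_terminal (hp : PosZigZag n p) (hr : Reachable (mkInit n (zigTurns p)) c)
    (hterm : Terminal c) : ∀ i < n, c.st i = 0 ∧ c.pos i = p i - p 0 := by
  have hc := TurnInv.of_reachable (t := zigTurns p) (fun i => stepTurns_nonneg _) hr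
  have hzero : ∀ i < n, c.st i = 0 := by
    by_contra! hactive
    obtain ⟨i, hi⟩ := hp.exists_applicable hc hactive
    exact hterm i hi
  refine fun i hi => ⟨hzero i hi, ?_⟩
  have hdir : ∀ m ∈ Finset.Ico 0 i, dir c m = p (m + 1) - p m := fun m hm => by
    have := (Finset.mem_Ico.1 hm).2
    rw [hc.2 m (by omega), hzero m (by omega), sub_zero, hp.zigDir_zigTurns (by omega)]
  have hsum := c.pos_sub_pos_eq_sum_dir (Nat.zero_le i)
  rwa [Finset.sum_congr rfl hdir, Finset.sum_Ico_sub p (Nat.zero_le i), c.pos_zero,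
    Prod.mk_zero_zero, sub_zero] at hsum

lemma NegZigZag.posZigZag_reflect (hp : NegZigZag n p) : PosZigZag n (fun i => reflect (p i)) := by
  refine ⟨fun i hi j hj h => hp.1 i hi j hj (reflect.injective h), fun i hi => ?_⟩
  rw [← map_sub]
  have := hp.2 i hi
  simp only [Set.mem_insert_iff, Set.mem_singleton_iff] at this ⊢
  rcases this with h | h | h | h <;> simp [h, reflect]

lemma NegZigZag.eq_of_terminal (hp : NegZigZag n p)
    (hr : Reachable (mkInit n fun i => -zigTurns (fun j => reflect (p j)) i) c)
    (hterm : Terminal c) : ∀ i < n, c.st i = 0 ∧ c.pos i = p i - p 0 := by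
  have hmirror := hr.mirror
  simp only [Config.mirror_mkInit, neg_neg] at hmirror
  intro i hi
  obtain ⟨hst, hpos⟩ := hp.posZigZag_reflect.eq_of_terminal hmirror hterm.mirror i hi
  refine ⟨neg_eq_zero.1 hst, reflect.injective ?_⟩
  rw [map_sub]
  exact hpos

end Folding

/-- Every positive or negative zig-zag path `p₀, …, p_{n-1}` is foldable by a
Turning Machine: suitable initial states make the machine compute the target configuration
with `pos m_i = p_i - p₀` and all states `0`. -/
theorem zigzag_foldable (n : ℕ) (p : ℕ → Pt) (h : PosZigZag n p ∨ NegZigZag n p) :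
    ∃ s₀ : ℕ → ℤ, ∃ ct : Config n, Computes (mkInit n s₀) ct ∧
      (∀ i < n, ct.st i = 0) ∧ ∀ i < n, ct.pos i = p i - p 0 := by
  obtain ⟨s₀, hs₀⟩ : ∃ s₀ : ℕ → ℤ, ∀ c, Reachable (mkInit n s₀) c → Terminal c →
      ∀ i < n, c.st i = 0 ∧ c.pos i = p i - p 0 := by
    rcases h with hp | hp
    · exact ⟨_, fun c => hp.eq_of_terminal⟩
    · exact ⟨_, fun c => hp.eq_of_terminal⟩
  obtain ⟨ct, hct, hagree⟩ := Config.exists_computes hs₀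
  exact ⟨s₀, ct, hct, fun i hi => (hagree i hi).1, fun i hi => (hagree i hi).2⟩

end TuringMachineFolding
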